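/- arXiv:2403.00409 — 2 statements merged into one kernel-verified Lean document; each statement's English description precedes it below -/
import Mathlib

section
/- For ε ∈ (0,1/2) and h ∈ ℝ, β > 0, the rDPO gradient weight ζ̂ = ((1−ε)σ(−βh) + εσ(βh))/(1−2ε) satisfies ζ̂ > σ(−βh) > ζ̄ where ζ̄ = (1−ε)σ(−βh) − εσ(βh). That is, rDPO weights strictly exceed DPO weights, which strictly exceed cDPO weights. -/
/-!
Since `σ(x) + σ(-x) = 1`, writing `p = σ(-βh)` the rDPO weight is `p + ε / (1 - 2ε)` and the
cDPO weight is `p - ε`: both differ from the DPO weight `p` by a quantity of fixed sign.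
-/

noncomputable def sigmoid (z : ℝ) : ℝ := 1 / (1 + Real.exp (-z))

lemma sigmoid_eq_real_sigmoid : sigmoid = Real.sigmoid :=
  funext fun _ => one_div _

lemma sigmoid_eq_one_sub_sigmoid_neg (x : ℝ) : sigmoid x = 1 - sigmoid (-x) := by
  rw [sigmoid_eq_real_sigmoid, Real.sigmoid_neg]
  ring

lemma one_sub_mul_add_mul_one_sub_div_eq {K : Type*} [Field K] (p ε : K) (hε : 1 - 2 * ε ≠ 0) :
    ((1 - ε) * p + ε * (1 - p)) / (1 - 2 * ε) = p + ε / (1 - 2 * ε) := by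
  rw [add_div' _ _ _ hε]
  congr 1
  ring

lemma one_sub_mul_sub_mul_one_sub_eq {R : Type*} [CommRing R] (p ε : R) :
    (1 - ε) * p - ε * (1 - p) = p - ε := by
  ring

theorem gradient_weights_strict_order_general (β h ε : ℝ) (hε0 : 0 < ε) (hε1 : ε < 1/2) :
    ((1 - ε) * sigmoid (-(β * h)) + ε * sigmoid (β * h)) / (1 - 2 * ε) > sigmoid (-(β * h)) ∧
    sigmoid (-(β * h)) > (1 - ε) * sigmoid (-(β * h)) - ε * sigmoid (β * h) := by
  have hd : 0 < 1 - 2 * ε := by linarith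
  rw [sigmoid_eq_one_sub_sigmoid_neg (β * h), one_sub_mul_add_mul_one_sub_div_eq _ _ hd.ne',
    one_sub_mul_sub_mul_one_sub_eq]
  constructor
  · linarith [div_pos hε0 hd]
  · linarith

theorem gradient_weights_strict_order (β h ε : ℝ) (hβ : 0 < β) (hε0 : 0 < ε) (hε1 : ε < 1/2) :
    ((1 - ε) * sigmoid (-(β * h)) + ε * sigmoid (β * h)) / (1 - 2 * ε) > sigmoid (-(β * h)) ∧
    sigmoid (-(β * h)) > (1 - ε) * sigmoid (-(β * h)) - ε * sigmoid (β * h) :=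
  gradient_weights_strict_order_general β h ε hε0 hε1
end

section
/- Under the Plackett–Luce K-wise noise model where the observed ranking π̃ equals the true ranking π with probability 1 − ε and equals each of the other N−1 rankings with probability ε/(N−1), the robust loss L̂_ε(π̃) = ((N−1−ε)·L(π̃) − ε·Σ_{π'≠π̃} L(π')) / ((1−ε)N − 1) is an unbiased estimator of L(π): E_{π̃}[L̂_ε(π̃)] = L(π), for any ε ∈ [0, (N−1)/N) and any function L on the set of N rankings. -/
/-!
With `S = ∑ τ, L τ` and `D = (1 - ε) N - 1`, the robust loss is `L̂ τ = ((N - 1) L τ - ε S) / D`,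
and its total is again `S`. The noisy expectation equals
`(1 - ε - ε/(N - 1)) L̂ π + ε/(N - 1) ∑ τ, L̂ τ`, and the coefficient `1 - ε - ε/(N - 1)` is
exactly `D / (N - 1)`, which cancels the denominator of `L̂ π`.
-/

open Finset

lemma Finset.mul_add_sum_erase_mul {ι K : Type*} [CommRing K] [DecidableEq ι] {s : Finset ι} {i : ι}
    (hi : i ∈ s) (f : ι → K) (p q : K) :
    p * f i + ∑ j ∈ s.erase i, q * f j = (p - q) * f i + q * ∑ j ∈ s, f j := by
  rw [← mul_sum, sum_erase_eq_sub hi]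
  ring

section RobustLoss

variable {R : Type*} [Fintype R] [DecidableEq R]

noncomputable def robustLoss (L : R → ℝ) (ε : ℝ) (τ : R) : ℝ :=
  (((Fintype.card R : ℝ) - 1 - ε) * L τ - ε * ∑ π' ∈ univ.erase τ, L π') /
    ((1 - ε) * Fintype.card R - 1)

lemma robustLoss_eq (L : R → ℝ) (ε : ℝ) (τ : R) :
    robustLoss L ε τ =
      (((Fintype.card R : ℝ) - 1) * L τ - ε * ∑ π, L π) / ((1 - ε) * Fintype.card R - 1) := by
  rw [robustLoss, sum_erase_eq_sub (mem_univ τ)]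
  ring

lemma sum_robustLoss (L : R → ℝ) {ε : ℝ} (hε : (1 - ε) * Fintype.card R - 1 ≠ 0) :
    ∑ τ, robustLoss L ε τ = ∑ τ, L τ := by
  simp_rw [robustLoss_eq, ← sum_div, sum_sub_distrib, ← mul_sum, sum_const, card_univ,
    nsmul_eq_mul, div_eq_iff hε]
  ring

end RobustLoss

theorem plackett_luce_robust_loss_unbiased_general {R : Type*} [Fintype R] [DecidableEq R]
    (L : R → ℝ) (π : R) (ε : ℝ)
    (hcard : 2 ≤ Fintype.card R)
    (hε1 : ε < ((Fintype.card R : ℝ) - 1) / (Fintype.card R : ℝ)) :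
    let N : ℝ := (Fintype.card R : ℝ)
    let Lhat : R → ℝ := fun τ =>
      ((N - 1 - ε) * L τ - ε * ∑ π' ∈ Finset.univ.erase τ, L π') / ((1 - ε) * N - 1)
    (1 - ε) * Lhat π + ∑ τ ∈ Finset.univ.erase π, (ε / (N - 1)) * Lhat τ = L π := by
  intro N Lhat
  change (1 - ε) * robustLoss L ε π +
    ∑ τ ∈ univ.erase π, (ε / ((Fintype.card R : ℝ) - 1)) * robustLoss L ε τ = L π
  have hN : (2 : ℝ) ≤ Fintype.card R := by exact_mod_cast hcard
  have hD : (1 - ε) * Fintype.card R - 1 ≠ 0 := by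
    have := (lt_div_iff₀ (by linarith)).mp hε1
    nlinarith
  have hN1 : (Fintype.card R : ℝ) - 1 ≠ 0 := by linarith
  rw [mul_add_sum_erase_mul (mem_univ π), sum_robustLoss L hD, robustLoss_eq]
  field_simp
  ring

theorem plackett_luce_robust_loss_unbiased {R : Type*} [Fintype R] [DecidableEq R]
    (L : R → ℝ) (π : R) (ε : ℝ)
    (hcard : 2 ≤ Fintype.card R)
    (hε0 : 0 ≤ ε) (hε1 : ε < ((Fintype.card R : ℝ) - 1) / (Fintype.card R : ℝ)) :
    let N : ℝ := (Fintype.card R : ℝ)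
    let Lhat : R → ℝ := fun τ =>
      ((N - 1 - ε) * L τ - ε * ∑ π' ∈ Finset.univ.erase τ, L π') / ((1 - ε) * N - 1)
    (1 - ε) * Lhat π + ∑ τ ∈ Finset.univ.erase π, (ε / (N - 1)) * Lhat τ = L π :=
  plackett_luce_robust_loss_unbiased_general L π ε hcard hε1
end
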